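/- arXiv:0707.0966 — 8 statements merged into one kernel-verified Lean document; each statement's English description precedes it below -/
import Mathlib

section
/- Let S be the unilateral shift on ℓ²(ℕ). If T is a bounded idempotent operator on ℓ²(ℕ) commuting with S, then T = 0 or T = I. -/
/-!
An operator `T` commuting with the shift is determined by `f = T e₀`: since `eₙ = Sⁿ e₀`,
it acts on generating functions as multiplication by `∑ fₙ Xⁿ`. Idempotence of `T` makes
this power series idempotent in the integral domain `𝕜⟦X⟧`, so it is `0` or `1`.
-/

open scoped ENNReal

section

variable {𝕜 : Type*} [NormedField 𝕜] {p : ℝ≥0∞} [Fact (1 ≤ p)]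

structure IsUnilateralShift (S : lp (fun _ : ℕ => 𝕜) p →L[𝕜] lp (fun _ : ℕ => 𝕜) p) :
    Prop where
  apply_zero : ∀ x, S x 0 = 0
  apply_succ : ∀ x n, S x (n + 1) = x n

namespace IsUnilateralShift

variable {S : lp (fun _ : ℕ => 𝕜) p →L[𝕜] lp (fun _ : ℕ => 𝕜) p}
  (hS : IsUnilateralShift S)
include hS

theorem pow_apply (n : ℕ) (x : lp (fun _ : ℕ => 𝕜) p) (m : ℕ) :
    (S ^ n) x m = if n ≤ m then x (m - n) else 0 := by
  induction n generalizing m with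
  | zero => simp
  | succ n ih =>
    rw [pow_succ', mul_apply_eq_comp]
    cases m with
    | zero => simp [hS.apply_zero]
    | succ m => simp only [hS.apply_succ, ih, Nat.add_le_add_iff_right, Nat.add_sub_add_right]

theorem pow_single_zero (n : ℕ) (a : 𝕜) : (S ^ n) (lp.single p 0 a) = lp.single p n a := by
  refine lp.ext (funext fun m => ?_)
  rw [hS.pow_apply, lp.single_apply, lp.single_apply]
  rcases lt_trichotomy m n with hmn | rfl | hmn
  · rw [if_neg (by omega), Pi.single_eq_of_ne hmn.ne]
  · simp
  · rw [if_pos hmn.le, Pi.single_eq_of_ne (by omega), Pi.single_eq_of_ne hmn.ne']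

theorem mk_apply_eq_mul_of_commute (hp : p ≠ ⊤)
    {T : lp (fun _ : ℕ => 𝕜) p →L[𝕜] lp (fun _ : ℕ => 𝕜) p} (hTS : Commute T S)
    (x : lp (fun _ : ℕ => 𝕜) p) :
    PowerSeries.mk (T x) = PowerSeries.mk x * PowerSeries.mk (T (lp.single p 0 1)) := by
  set f := T (lp.single p 0 1)
  ext m
  have hT_single (n : ℕ) : T (lp.single p n (x n)) = x n • (S ^ n) f := by
    have : lp.single p n (x n) = x n • (S ^ n) (lp.single p 0 1) := by
      rw [hS.pow_single_zero, ← lp.single_smul, smul_eq_mul, mul_one]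
    rw [this, map_smul, ← mul_apply_eq_comp, (hTS.pow_right n).eq, mul_apply_eq_comp]
  have heval (y : lp (fun _ : ℕ => 𝕜) p) : lp.evalCLM 𝕜 (fun _ : ℕ => 𝕜) p m y = y m :=
    rfl
  have hsum : HasSum (fun n => x n * if n ≤ m then f (m - n) else 0) (T x m) := by
    simpa only [ContinuousLinearMap.comp_apply, hT_single, heval, lp.coeFn_smul, Pi.smul_apply,
      smul_eq_mul, hS.pow_apply] using
      ((lp.evalCLM 𝕜 (fun _ : ℕ => 𝕜) p m).comp T).hasSum (lp.hasSum_single hp x)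
  have hfin : ∀ n ∉ Finset.range (m + 1), (x n * if n ≤ m then f (m - n) else 0) = 0 := by
    intro n hn
    rw [if_neg (by simpa [Nat.lt_succ_iff] using hn), mul_zero]
  rw [PowerSeries.coeff_mk, PowerSeries.coeff_mul,
    ← (hasSum_sum_of_ne_finset_zero hfin).unique hsum,
    Finset.Nat.sum_antidiagonal_eq_sum_range_succ_mk]
  refine Finset.sum_congr rfl fun n hn => ?_
  rw [if_pos (Nat.lt_succ_iff.mp (Finset.mem_range.mp hn))]
  simp

theorem eq_zero_or_eq_one_of_commute (hp : p ≠ ⊤)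
    {T : lp (fun _ : ℕ => 𝕜) p →L[𝕜] lp (fun _ : ℕ => 𝕜) p} (hT : IsIdempotentElem T)
    (hTS : Commute T S) : T = 0 ∨ T = 1 := by
  set F := PowerSeries.mk (T (lp.single p 0 1))
  have hF : IsIdempotentElem F := by
    have := hS.mk_apply_eq_mul_of_commute hp hTS (T (lp.single p 0 1))
    rw [← mul_apply_eq_comp, hT.eq] at this
    exact this.symm
  have hcoeff (x : lp (fun _ : ℕ => 𝕜) p) (n : ℕ) :
      T x n = PowerSeries.coeff n (PowerSeries.mk x * F) := by
    rw [← hS.mk_apply_eq_mul_of_commute hp hTS, PowerSeries.coeff_mk]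
  refine (IsIdempotentElem.iff_eq_zero_or_one.mp hF).imp (fun hF0 => ?_) (fun hF1 => ?_) <;>
    refine ContinuousLinearMap.ext fun x => lp.ext (funext fun n => ?_)
  · simp [hcoeff, hF0]
  · simp [hcoeff, hF1]

end IsUnilateralShift

end

/-- If `S` is the unilateral shift on `ℓ²(ℕ)` (i.e. `(Sx)₀ = 0`,
`(Sx)ₙ₊₁ = xₙ`) and `T` is a bounded idempotent commuting with `S`, then `T = 0` or `T = I`. -/
theorem idempotent_commuting_with_shift
    (S : lp (fun _ : ℕ => ℂ) 2 →L[ℂ] lp (fun _ : ℕ => ℂ) 2)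
    (hS0 : ∀ x : lp (fun _ : ℕ => ℂ) 2, S x 0 = 0)
    (hS : ∀ (x : lp (fun _ : ℕ => ℂ) 2) (n : ℕ), S x (n + 1) = x n)
    (T : lp (fun _ : ℕ => ℂ) 2 →L[ℂ] lp (fun _ : ℕ => ℂ) 2)
    (hT : T.comp T = T) (hTS : T.comp S = S.comp T) :
    T = 0 ∨ T = ContinuousLinearMap.id ℂ (lp (fun _ : ℕ => ℂ) 2) :=
  IsUnilateralShift.eq_zero_or_eq_one_of_commute ⟨hS0, hS⟩ ENNReal.ofNat_ne_top hT hTS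
end

section
/- The Hilbert representation of the loop quiver (one vertex, one arrow) given by H₁ = ℓ²(ℕ) and f_α = S the unilateral shift is an infinite-dimensional indecomposable Hilbert representation. -/
/-!
An operator `T` commuting with the shift is determined by its symbol `a = T e₀`: reading
sequences as formal power series, `S` is multiplication by `X`, so on `e_n = Sⁿ e₀` the operator
`T` is multiplication by `a`, and by continuity it is so everywhere. Hence `T² = T` makes `a` an
idempotent of the integral domain `𝕜⟦X⟧`, i.e. `a = 0` or `a = 1`. Infinite dimensionality
comes from `S` being injective but not surjective.
-/

open scoped ENNReal
open Finset.HasAntidiagonal (antidiagonal)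
open PowerSeries

variable {𝕜 : Type*} [NormedField 𝕜] {p : ℝ≥0∞}

theorem mk_single (n : ℕ) (c : 𝕜) : mk ⇑(lp.single p n c) = monomial n c := by
  ext m
  simp [coeff_monomial, lp.single_apply, Pi.single_apply]

variable [Fact (1 ≤ p)] {S : lp (fun _ : ℕ => 𝕜) p →L[𝕜] lp (fun _ : ℕ => 𝕜) p}

@[simp] theorem lp.evalCLM_apply (m : ℕ) (x : lp (fun _ : ℕ => 𝕜) p) :
    lp.evalCLM 𝕜 (fun _ : ℕ => 𝕜) p m x = x m :=
  rfl

theorem shift_injective (hS : ∀ x n, S x (n + 1) = x n) : Function.Injective S :=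
  fun x y h => lp.ext <| funext fun n => by rw [← hS x n, ← hS y n, h]

theorem shift_not_surjective (hS0 : ∀ x, S x 0 = 0) : ¬ Function.Surjective S := fun h => by
  obtain ⟨x, hx⟩ := h (lp.single p 0 1)
  simpa [hS0] using congr($hx 0)

theorem not_finiteDimensional_of_shift (hS0 : ∀ x, S x 0 = 0) (hS : ∀ x n, S x (n + 1) = x n) :
    ¬ FiniteDimensional 𝕜 (lp (fun _ : ℕ => 𝕜) p) := fun _ =>
  shift_not_surjective hS0 (LinearMap.injective_iff_surjective.mp (shift_injective hS))

theorem shift_single (hS0 : ∀ x, S x 0 = 0) (hS : ∀ x n, S x (n + 1) = x n) (n : ℕ) (c : 𝕜) :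
    S (lp.single p n c) = lp.single p (n + 1) c := by
  ext (_ | m) <;> simp [hS0, hS, lp.single_apply, Pi.single_apply]

theorem mk_shift (hS0 : ∀ x, S x 0 = 0) (hS : ∀ x n, S x (n + 1) = x n)
    (x : lp (fun _ : ℕ => 𝕜) p) : mk ⇑(S x) = X * mk ⇑x := by
  ext (_ | n) <;> simp [hS0, hS, coeff_succ_X_mul]

theorem mk_apply_single_of_commute (hS0 : ∀ x, S x 0 = 0) (hS : ∀ x n, S x (n + 1) = x n)
    {T : lp (fun _ : ℕ => 𝕜) p →L[𝕜] lp (fun _ : ℕ => 𝕜) p} (hTS : Commute T S) (n : ℕ) (c : 𝕜) :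
    mk ⇑(T (lp.single p n c)) = monomial n c * mk ⇑(T (lp.single p 0 1)) := by
  induction n with
  | zero =>
    rw [← mul_one c, ← smul_eq_mul, lp.single_smul, map_smul]
    ext
    simp
  | succ n ih =>
    have hTSx : T (S (lp.single p n c)) = S (T (lp.single p n c)) := congr($(hTS.eq) _)
    rw [← shift_single hS0 hS, hTSx, mk_shift hS0 hS, ih, ← mul_assoc,
      X_eq, monomial_mul_monomial, one_mul, add_comm]

theorem mk_apply_of_commute (hp : p ≠ ∞) (hS0 : ∀ x, S x 0 = 0)
    (hS : ∀ x n, S x (n + 1) = x n)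
    {T : lp (fun _ : ℕ => 𝕜) p →L[𝕜] lp (fun _ : ℕ => 𝕜) p} (hTS : Commute T S)
    (x : lp (fun _ : ℕ => 𝕜) p) :
    mk ⇑(T x) = mk ⇑x * mk ⇑(T (lp.single p 0 1)) := by
  set a := mk ⇑(T (lp.single p 0 1))
  ext m
  have key : (lp.evalCLM 𝕜 _ p m).comp T =
      ∑ ij ∈ antidiagonal m, coeff ij.2 a • lp.evalCLM 𝕜 (fun _ : ℕ => 𝕜) p ij.1 := by
    refine lp.ext_continuousLinearMap hp fun n => ContinuousLinearMap.ext fun c => ?_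
    have := congr(coeff m $(mk_apply_single_of_commute hS0 hS hTS n c))
    rw [← mk_single (p := p), coeff_mul] at this
    simpa [a, mul_comm] using this
  simpa [coeff_mul, mul_comm] using congr($key x)

/-- The Hilbert representation of the loop quiver (one vertex, one arrow)
given by `H₁ = ℓ²(ℕ)` and `f_α = S` the unilateral shift is infinite dimensional and
indecomposable (equivalently: every bounded idempotent commuting with `S` is `0` or `I`). -/
theorem shift_loop_representation_indecomposable
    (S : lp (fun _ : ℕ => ℂ) 2 →L[ℂ] lp (fun _ : ℕ => ℂ) 2)
    (hS0 : ∀ x : lp (fun _ : ℕ => ℂ) 2, S x 0 = 0)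
    (hS : ∀ (x : lp (fun _ : ℕ => ℂ) 2) (n : ℕ), S x (n + 1) = x n) :
    ¬ FiniteDimensional ℂ (lp (fun _ : ℕ => ℂ) 2) ∧
      ∀ T : lp (fun _ : ℕ => ℂ) 2 →L[ℂ] lp (fun _ : ℕ => ℂ) 2,
        T.comp T = T → T.comp S = S.comp T →
        T = 0 ∨ T = ContinuousLinearMap.id ℂ (lp (fun _ : ℕ => ℂ) 2) := by
  refine ⟨not_finiteDimensional_of_shift hS0 hS, fun T hT2 hTS => ?_⟩
  have hmk := mk_apply_of_commute (by norm_num) hS0 hS hTS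
  have ha : IsIdempotentElem (mk ⇑(T (lp.single 2 0 1))) := by
    have := hmk (T (lp.single 2 0 1))
    rw [← ContinuousLinearMap.comp_apply, hT2] at this
    exact this.symm
  rcases IsIdempotentElem.iff_eq_zero_or_one.mp ha with ha | ha
  · left
    ext x n
    simpa [ha] using congr(coeff n $(hmk x))
  · right
    ext x n
    simpa [ha] using congr(coeff n $(hmk x))
end

section
/- Let K be a Hilbert space, A, B bounded operators on K. In H = K ⊕ K consider the systems of four subspaces S_A = (H; K⊕0, 0⊕K, graph A, diagonal) and S_B likewise. Then S_A and S_B are isomorphic as systems of four subspaces if and only if A and B are similar. -/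
/-! An isomorphism `φ` preserving `K ⊕ 0` and `0 ⊕ K` is block diagonal, `W₁ ⊕ W₂`; preserving
the diagonal forces `W₁ = W₂ =: W`, and then `φ` carries `graph A` into `graph B` exactly when
`W A = B W`. Running the same argument for `φ⁻¹` produces an inverse of `W`. -/

variable {K : Type*} [NormedAddCommGroup K] [InnerProductSpace ℂ K] [CompleteSpace K]

/-- The system of four subspaces `(K ⊕ 0, 0 ⊕ K, graph A, diagonal)` in `H = K ⊕₂ K`
associated with a bounded operator `A` on `K`. -/
noncomputable def fourSubspaceSystem (A : K →L[ℂ] K) : Fin 4 → Submodule ℂ (WithLp 2 (K × K)) :=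
  ![Submodule.comap (WithLp.linearEquiv 2 ℂ (K × K)).toLinearMap (Submodule.prod ⊤ ⊥),
    Submodule.comap (WithLp.linearEquiv 2 ℂ (K × K)).toLinearMap (Submodule.prod ⊥ ⊤),
    Submodule.comap (WithLp.linearEquiv 2 ℂ (K × K)).toLinearMap
      (LinearMap.graph (A : K →ₗ[ℂ] K)),
    Submodule.comap (WithLp.linearEquiv 2 ℂ (K × K)).toLinearMap
      (LinearMap.graph (LinearMap.id (R := ℂ) (M := K)))]

/-- Isomorphism of systems of four subspaces: a bounded invertible operator carrying each
subspace onto the corresponding one. -/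
def FourSystemIso (E F : Fin 4 → Submodule ℂ (WithLp 2 (K × K))) : Prop :=
  ∃ φ : WithLp 2 (K × K) ≃L[ℂ] WithLp 2 (K × K),
    ∀ i, Submodule.map (φ.toLinearEquiv.toLinearMap) (E i) = F i

open WithLp Set

theorem Submodule.map_equiv_eq_iff_mapsTo {R M N : Type*} [Semiring R] [AddCommMonoid M]
    [AddCommMonoid N] [Module R M] [Module R N] (e : M ≃ₗ[R] N) (p : Submodule R M)
    (q : Submodule R N) : p.map (e : M →ₗ[R] N) = q ↔ MapsTo e p q ∧ MapsTo e.symm q p := by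
  rw [le_antisymm_iff, Submodule.map_le_iff_le_comap]
  exact and_congr Iff.rfl ⟨fun h x hx => (Submodule.mem_map_equiv _).1 (h hx),
    fun h x hx => (Submodule.mem_map_equiv _).2 (h hx)⟩

section
variable {K : Type*} [NormedAddCommGroup K] [InnerProductSpace ℂ K]

theorem fourSystemIso_iff_mapsTo (E F : Fin 4 → Submodule ℂ (WithLp 2 (K × K))) :
    FourSystemIso E F ↔ ∃ φ : WithLp 2 (K × K) ≃L[ℂ] WithLp 2 (K × K),
      (∀ i, MapsTo φ (E i) (F i)) ∧ ∀ i, MapsTo φ.symm (F i) (E i) := by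
  simp only [FourSystemIso, Submodule.map_equiv_eq_iff_mapsTo, forall_and]
  rfl

section
variable (A : K →L[ℂ] K) (x y : K)

@[simp] theorem toLp_mem_fourSubspaceSystem_zero :
    toLp 2 (x, y) ∈ fourSubspaceSystem A 0 ↔ y = 0 := by
  simp [fourSubspaceSystem, Submodule.mem_prod]

@[simp] theorem toLp_mem_fourSubspaceSystem_one :
    toLp 2 (x, y) ∈ fourSubspaceSystem A 1 ↔ x = 0 := by
  simp [fourSubspaceSystem, Submodule.mem_prod]

@[simp] theorem toLp_mem_fourSubspaceSystem_two :
    toLp 2 (x, y) ∈ fourSubspaceSystem A 2 ↔ y = A x := by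
  simp [fourSubspaceSystem, LinearMap.mem_graph_iff]

@[simp] theorem toLp_mem_fourSubspaceSystem_three :
    toLp 2 (x, y) ∈ fourSubspaceSystem A 3 ↔ y = x := by
  simp [fourSubspaceSystem, LinearMap.mem_graph_iff]

end

theorem exists_diagonal_of_mapsTo_fourSubspaceSystem {A B : K →L[ℂ] K}
    {f : WithLp 2 (K × K) →L[ℂ] WithLp 2 (K × K)}
    (hf : ∀ i, MapsTo f (fourSubspaceSystem A i) (fourSubspaceSystem B i)) :
    ∃ W : K →L[ℂ] K, (∀ x y, f (toLp 2 (x, y)) = toLp 2 (W x, W y)) ∧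
      ∀ x, W (A x) = B (W x) := by
  let W : K →L[ℂ] K := (WithLp.fstL 2 ℂ K K).comp
    (f.comp ((prodContinuousLinearEquiv 2 ℂ K K).symm.toContinuousLinearMap.comp
      (ContinuousLinearMap.inl ℂ K K)))
  have hleft (x : K) : f (toLp 2 (x, 0)) = toLp 2 (W x, 0) := by
    rcases h : f (toLp 2 (x, 0)) with ⟨a, b⟩
    have hb : b = 0 := by simpa [h] using @hf 0 (toLp 2 (x, 0)) (by simp)
    simp [W, h, hb]
  obtain ⟨V, hright⟩ : ∃ V : K → K, ∀ y, f (toLp 2 (0, y)) = toLp 2 (0, V y) := by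
    refine ⟨fun y => (f (toLp 2 (0, y))).snd, fun y => ?_⟩
    rcases h : f (toLp 2 (0, y)) with ⟨a, b⟩
    have ha : a = 0 := by simpa [h] using @hf 1 (toLp 2 (0, y)) (by simp)
    simp [h, ha]
  have hblock (x y : K) : f (toLp 2 (x, y)) = toLp 2 (W x, V y) := by
    calc f (toLp 2 (x, y)) = f (toLp 2 (x, 0) + toLp 2 (0, y)) := by simp [← toLp_add]
      _ = toLp 2 (W x, V y) := by
        rw [map_add, hleft, hright, ← toLp_add, Prod.mk_add_mk, add_zero, zero_add]
  have hVW (y : K) : V y = W y := by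
    simpa [hblock] using @hf 3 (toLp 2 (y, y)) (by simp)
  have hdiag (x y : K) : f (toLp 2 (x, y)) = toLp 2 (W x, W y) := by rw [hblock, hVW]
  refine ⟨W, hdiag, fun x => ?_⟩
  simpa [hdiag, eq_comm] using @hf 2 (toLp 2 (x, A x)) (by simp)

theorem mapsTo_fourSubspaceSystem_of_diagonal {A B W : K →L[ℂ] K}
    {f : WithLp 2 (K × K) → WithLp 2 (K × K)}
    (hf : ∀ x y, f (toLp 2 (x, y)) = toLp 2 (W x, W y)) (hW : ∀ x, W (A x) = B (W x))
    (i : Fin 4) :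
    MapsTo f (fourSubspaceSystem A i) (fourSubspaceSystem B i) := by
  rintro ⟨x, y⟩ hxy
  fin_cases i <;> simp_all

end

/-- The systems `S_A` and `S_B` of four subspaces are isomorphic iff the
operators `A` and `B` are similar. -/
theorem fourSubspaceSystem_iso_iff_similar (A B : K →L[ℂ] K) :
    FourSystemIso (fourSubspaceSystem A) (fourSubspaceSystem B) ↔
      ∃ W : K ≃L[ℂ] K, ∀ x, W (A x) = B (W x) := by
  rw [fourSystemIso_iff_mapsTo]
  constructor
  · rintro ⟨φ, hφ, hφsymm⟩
    obtain ⟨W, hW, hWA⟩ := exists_diagonal_of_mapsTo_fourSubspaceSystem (A := A) (B := B)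
      (f := φ) hφ
    obtain ⟨W', hW', -⟩ := exists_diagonal_of_mapsTo_fourSubspaceSystem (A := B) (B := A)
      (f := φ.symm) hφsymm
    simp only [ContinuousLinearEquiv.coe_coe] at hW hW'
    have hinv₁ (x : K) : W' (W x) = x := by
      have h := φ.symm_apply_apply (toLp 2 (x, 0))
      rw [hW, hW'] at h
      exact congrArg WithLp.fst h
    have hinv₂ (x : K) : W (W' x) = x := by
      have h := φ.apply_symm_apply (toLp 2 (x, 0))
      rw [hW', hW] at h
      exact congrArg WithLp.fst h
    exact ⟨.equivOfInverse W W' hinv₁ hinv₂, hWA⟩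
  · rintro ⟨W, hW⟩
    let e := prodContinuousLinearEquiv 2 ℂ K K
    have hWsymm (x : K) : W.symm (B x) = A (W.symm x) := W.injective (by simp [hW])
    exact ⟨e.trans ((W.prodCongr W).trans e.symm),
      mapsTo_fourSubspaceSystem_of_diagonal (W := W) (fun _ _ => rfl) hW,
      mapsTo_fourSubspaceSystem_of_diagonal (A := B) (B := A) (W := W.symm) (fun _ _ => rfl)
        hWsymm⟩
end

section
/- Let S be the unilateral shift on K = ℓ²(ℕ), H₀ = K³. Define H₁ = K⊕0⊕K, H₂ = 0⊕0⊕K, H₁' = K⊕K⊕0, H₂' = 0⊕K⊕0, H₁'' = {(x,x,x)+(y,Sy,0) : x,y ∈ K}, H₂'' = {(x,x,x) : x ∈ K}. If T₀ is a bounded idempotent on H₀ leaving each of these six subspaces invariant, then T₀ = 0 or T₀ = I. -/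
/-!
Invariance of `H₁ ∩ H₁' = K⊕0⊕0`, `H₂'` and `H₂` makes `T₀` block diagonal, and invariance of
the diagonal `H₂''` makes the three blocks one and the same idempotent `P` on `K`. Feeding
`(y, Sy, 0) ∈ H₁''` to `T₀` shows `PS = SP`. An operator commuting with the unilateral shift is
multiplication by the power series `f` whose coefficients are those of `P e₀`, so `P² = P`
becomes `f² = f` in the integral domain `ℂ⟦X⟧`. Hence `f ∈ {0, 1}`, i.e. `P ∈ {0, 1}`.
-/

open scoped ENNReal
open PowerSeries

section UnilateralShift

variable {𝕜 : Type*} [NormedField 𝕜] {p : ℝ≥0∞} [Fact (1 ≤ p)]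
  {S : lp (fun _ : ℕ => 𝕜) p →L[𝕜] lp (fun _ : ℕ => 𝕜) p}

theorem shift_pow_apply (hS0 : ∀ x, S x 0 = 0) (hS : ∀ x n, S x (n + 1) = x n)
    (n : ℕ) (x : lp (fun _ : ℕ => 𝕜) p) (m : ℕ) :
    (S ^ n) x m = if n ≤ m then x (m - n) else 0 := by
  induction n generalizing m with
  | zero => simp
  | succ n ih =>
    rw [pow_succ', mul_apply_eq_comp]
    cases m with
    | zero => simp [hS0]
    | succ m =>
      rw [hS, ih, Nat.add_sub_add_right]
      exact if_congr (by omega) rfl rfl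

theorem shift_pow_single_zero (hS0 : ∀ x, S x 0 = 0) (hS : ∀ x n, S x (n + 1) = x n)
    (n : ℕ) (c : 𝕜) : (S ^ n) (lp.single p 0 c) = lp.single p n c := by
  ext m
  rw [shift_pow_apply hS0 hS, lp.single_apply, lp.single_apply]
  split_ifs <;> grind

theorem apply_eq_coeff_mul_of_commute_shift (hp : p ≠ ⊤)
    (hS0 : ∀ x, S x 0 = 0) (hS : ∀ x n, S x (n + 1) = x n)
    {P : lp (fun _ : ℕ => 𝕜) p →L[𝕜] lp (fun _ : ℕ => 𝕜) p} (hPS : Commute P S)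
    (x : lp (fun _ : ℕ => 𝕜) p) (m : ℕ) :
    P x m = coeff m (mk x * mk (P (lp.single p 0 1))) := by
  set v := P (lp.single p 0 1)
  have hP_single (n : ℕ) (c : 𝕜) : P (lp.single p n c) = (S ^ n) (c • v) := by
    calc P (lp.single p n c) = (P * S ^ n) (lp.single p 0 c) := by
          rw [mul_apply_eq_comp, shift_pow_single_zero hS0 hS]
      _ = (S ^ n) (c • v) := by
          rw [(hPS.pow_right n).eq, mul_apply_eq_comp, ← map_smul, ← lp.single_smul,
            smul_eq_mul, mul_one]
  have hsum := ((lp.hasSum_single hp x).mapL P).mapL (lp.evalCLM 𝕜 _ p m)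
  have hterm (n : ℕ) : lp.evalCLM 𝕜 _ p m (P (lp.single p n (x n))) =
      if n ≤ m then x n * v (m - n) else 0 := by
    rw [hP_single]
    change ((S ^ n) (x n • v)) m = _
    rw [shift_pow_apply hS0 hS]
    split_ifs <;> rfl
  simp only [hterm] at hsum
  refine hsum.unique ?_
  rw [coeff_mul, Finset.Nat.sum_antidiagonal_eq_sum_range_succ
    (fun i j => coeff i (mk x) * coeff j (mk v))]
  have hfin : HasSum _ _ := hasSum_sum_of_ne_finset_zero (s := Finset.range (m + 1))
    (f := fun n => if n ≤ m then x n * v (m - n) else 0) fun n hn => if_neg (by simpa using hn)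
  simpa only [coeff_mk, Finset.sum_ite_of_true fun n hn =>
    Nat.lt_succ_iff.mp (Finset.mem_range.mp hn)] using hfin

theorem eq_zero_or_eq_one_of_isIdempotentElem_of_commute_shift (hp : p ≠ ⊤)
    (hS0 : ∀ x, S x 0 = 0) (hS : ∀ x n, S x (n + 1) = x n)
    {P : lp (fun _ : ℕ => 𝕜) p →L[𝕜] lp (fun _ : ℕ => 𝕜) p}
    (hP : IsIdempotentElem P) (hPS : Commute P S) : P = 0 ∨ P = 1 := by
  have hcoeff := apply_eq_coeff_mul_of_commute_shift hp hS0 hS hPS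
  set v := P (lp.single p 0 1)
  have hv : IsIdempotentElem (mk (v : ℕ → 𝕜)) := by
    ext m
    rw [← hcoeff, coeff_mk, ← mul_apply_eq_comp, hP.eq]
  rcases IsIdempotentElem.iff_eq_zero_or_one.mp hv with hv0 | hv1
  · left
    ext x m
    simp [hcoeff, hv0]
  · right
    ext x m
    simp [hcoeff, hv1]

end UnilateralShift

section CoordinateAxes

variable {ι E F : Type*} [Fintype ι] [DecidableEq ι] [AddCommGroup E] {p : ℝ≥0∞}
  [FunLike F (PiLp p fun _ : ι => E) (PiLp p fun _ : ι => E)]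
  [AddMonoidHomClass F (PiLp p fun _ : ι => E) (PiLp p fun _ : ι => E)]

theorem PiLp.univ_sum_single (w : PiLp p fun _ : ι => E) :
    ∑ i, PiLp.single p i (w i) = w := by
  apply WithLp.ofLp_injective p
  simp_rw [WithLp.ofLp_sum, PiLp.ofLp_single]
  exact Finset.univ_sum_single _

theorem apply_eq_apply_single_of_single_apply_eq_zero {T : F}
    (hT : ∀ i x j, j ≠ i → T (PiLp.single p i x) j = 0) (w : PiLp p fun _ : ι => E) (i : ι) :
    T w i = T (PiLp.single p i (w i)) i := by
  conv_lhs => rw [← PiLp.univ_sum_single w, map_sum, WithLp.ofLp_sum, Finset.sum_apply]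
  exact Finset.sum_eq_single i (fun j _ hji => hT j (w j) i (Ne.symm hji)) (by simp)

end CoordinateAxes

section E6

variable {E F : Type*} [AddCommGroup E] {p : ℝ≥0∞}
  [FunLike F (PiLp p fun _ : Fin 3 => E) (PiLp p fun _ : Fin 3 => E)] {T : F}

theorem single_apply_eq_zero_of_mapsTo_E6
    (h1 : Set.MapsTo T {w | w 1 = 0} {w | w 1 = 0})
    (h2 : Set.MapsTo T {w | w 0 = 0 ∧ w 1 = 0} {w | w 0 = 0 ∧ w 1 = 0})
    (h1' : Set.MapsTo T {w | w 2 = 0} {w | w 2 = 0})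
    (h2' : Set.MapsTo T {w | w 0 = 0 ∧ w 2 = 0} {w | w 0 = 0 ∧ w 2 = 0})
    (i : Fin 3) (x : E) (j : Fin 3) (hji : j ≠ i) : T (PiLp.single p i x) j = 0 := by
  fin_cases i <;> fin_cases j <;> simp at hji ⊢
  · exact h1 (by simp)
  · exact h1' (by simp)
  · exact (h2' (by simp)).1
  · exact (h2' (by simp)).2
  · exact (h2 (by simp)).1
  · exact (h2 (by simp)).2

theorem apply_single_eq_of_mapsTo_diagonal
    [AddMonoidHomClass F (PiLp p fun _ : Fin 3 => E) (PiLp p fun _ : Fin 3 => E)]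
    (hT : ∀ i x j, j ≠ i → T (PiLp.single p i x) j = 0)
    (h2'' : Set.MapsTo T {w | ∃ x, w 0 = x ∧ w 1 = x ∧ w 2 = x}
        {w | ∃ x, w 0 = x ∧ w 1 = x ∧ w 2 = x}) (i : Fin 3) (x : E) :
    T (PiLp.single p i x) i = T (PiLp.single p 0 x) 0 := by
  obtain ⟨y, h0, h1, h2⟩ := h2'' (x := WithLp.toLp p fun _ => x) ⟨x, rfl, rfl, rfl⟩
  rw [apply_eq_apply_single_of_single_apply_eq_zero hT] at h0 h1 h2
  dsimp only at h0 h1 h2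
  fin_cases i
  · rfl
  · exact h1.trans h0.symm
  · exact h2.trans h0.symm

theorem apply_single_shift_of_mapsTo
    [AddMonoidHomClass F (PiLp p fun _ : Fin 3 => E) (PiLp p fun _ : Fin 3 => E)] (S : E → E)
    (hT : ∀ w i, T w i = T (PiLp.single p 0 (w i)) 0)
    (h1'' : Set.MapsTo T {w | ∃ x y, w 0 = x + y ∧ w 1 = x + S y ∧ w 2 = x}
        {w | ∃ x y, w 0 = x + y ∧ w 1 = x + S y ∧ w 2 = x}) (y : E) :
    T (PiLp.single p 0 (S y)) 0 = S (T (PiLp.single p 0 y) 0) := by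
  obtain ⟨a, b, h0, h1, h2⟩ :=
    h1'' (x := WithLp.toLp p ![y, S y, 0]) ⟨0, y, by simp, by simp, by simp⟩
  rw [hT] at h0 h1 h2
  simp only [Matrix.cons_val_zero, Matrix.cons_val_one, Matrix.cons_val_two,
    Matrix.head_cons, Matrix.tail_cons] at h0 h1 h2
  rw [← PiLp.toLp_single, Pi.single_zero, WithLp.toLp_zero, map_zero] at h2
  obtain rfl : a = 0 := h2.symm
  rw [h0, h1, zero_add, zero_add]

end E6

/-- Let `S` be the unilateral shift on `K = ℓ²(ℕ)` and `H₀ = K ⊕₂ K ⊕₂ K`.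
If a bounded idempotent `T₀` on `H₀` leaves the six subspaces
`H₁ = K⊕0⊕K`, `H₂ = 0⊕0⊕K`, `H₁' = K⊕K⊕0`, `H₂' = 0⊕K⊕0`,
`H₁'' = {(x,x,x)+(y,Sy,0)}`, `H₂'' = {(x,x,x)}` invariant, then `T₀ = 0` or `T₀ = I`. -/
theorem idempotent_preserving_E6_subspaces
    (S : lp (fun _ : ℕ => ℂ) 2 →L[ℂ] lp (fun _ : ℕ => ℂ) 2)
    (hS0 : ∀ x : lp (fun _ : ℕ => ℂ) 2, S x 0 = 0)
    (hS : ∀ (x : lp (fun _ : ℕ => ℂ) 2) (n : ℕ), S x (n + 1) = x n)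
    (T₀ : PiLp 2 (fun _ : Fin 3 => lp (fun _ : ℕ => ℂ) 2)
        →L[ℂ] PiLp 2 (fun _ : Fin 3 => lp (fun _ : ℕ => ℂ) 2))
    (hidem : T₀.comp T₀ = T₀)
    (h1 : Set.MapsTo T₀ {w | w 1 = 0} {w | w 1 = 0})
    (h2 : Set.MapsTo T₀ {w | w 0 = 0 ∧ w 1 = 0} {w | w 0 = 0 ∧ w 1 = 0})
    (h1' : Set.MapsTo T₀ {w | w 2 = 0} {w | w 2 = 0})
    (h2' : Set.MapsTo T₀ {w | w 0 = 0 ∧ w 2 = 0} {w | w 0 = 0 ∧ w 2 = 0})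
    (h1'' : Set.MapsTo T₀ {w | ∃ x y, w 0 = x + y ∧ w 1 = x + S y ∧ w 2 = x}
        {w | ∃ x y, w 0 = x + y ∧ w 1 = x + S y ∧ w 2 = x})
    (h2'' : Set.MapsTo T₀ {w | ∃ x, w 0 = x ∧ w 1 = x ∧ w 2 = x}
        {w | ∃ x, w 0 = x ∧ w 1 = x ∧ w 2 = x}) :
    T₀ = 0 ∨ T₀ = ContinuousLinearMap.id ℂ (PiLp 2 (fun _ : Fin 3 => lp (fun _ : ℕ => ℂ) 2)) := by
  have haxes := single_apply_eq_zero_of_mapsTo_E6 h1 h2 h1' h2'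
  have hT (w) (i) : T₀ w i = T₀ (PiLp.single 2 0 (w i)) 0 :=
    (apply_eq_apply_single_of_single_apply_eq_zero haxes w i).trans
      (apply_single_eq_of_mapsTo_diagonal haxes h2'' i (w i))
  let P : lp (fun _ : ℕ => ℂ) 2 →L[ℂ] lp (fun _ : ℕ => ℂ) 2 :=
    PiLp.proj 2 _ 0 ∘L T₀ ∘L
      (PiLp.continuousLinearEquiv 2 ℂ _).symm.toContinuousLinearMap ∘L
        ContinuousLinearMap.single ℂ (fun _ : Fin 3 => lp (fun _ : ℕ => ℂ) 2) 0
  have hTP (w) (i) : T₀ w i = P (w i) := hT w i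
  have hP : IsIdempotentElem P := by
    ext x : 1
    change T₀ (PiLp.single 2 0 (T₀ (PiLp.single 2 0 x) 0)) 0 = T₀ (PiLp.single 2 0 x) 0
    rw [← hT, ← ContinuousLinearMap.comp_apply, hidem]
  have hPS : Commute P S := ContinuousLinearMap.ext (apply_single_shift_of_mapsTo S hT h1'')
  rcases eq_zero_or_eq_one_of_isIdempotentElem_of_commute_shift (by norm_num) hS0 hS hP hPS
    with hP | hP
  · exact Or.inl (ContinuousLinearMap.ext fun w => PiLp.ext fun i => by rw [hTP, hP]; rfl)
  · exact Or.inr (ContinuousLinearMap.ext fun w => PiLp.ext fun i => by rw [hTP, hP]; rfl)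
end

section
/- Let Γ be a finite quiver and v a sink. If a Hilbert representation (H,f) is closed at v, then (H,f) ≅ Φ_v⁻(Φ_v⁺(H,f)) ⊕ (H̃, f̃), where H̃_v = (Im h_v)^⊥, H̃_u = 0 for u ≠ v, and f̃ = 0, with h_v : ⊕_{α∈E^v} H_{s(α)} → H_v given by h_v((x_α)_α) = Σ_α f_α(x_α). -/
/-! With `R = range h_v` and `K = (ker h_v)ᗮ`, the map `(p, q) ↦ h_v p + q` from `K ⊕₂ Rᗮ` to `H_v`
is injective, since `h_v` is injective on `K` and `R ⊓ Rᗮ = ⊥`, and it is surjective because `R` is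
closed: then `H_v = R ⊕ Rᗮ` and `h_v` maps `K` onto `R`. Its inverse, together with the identity at
the other vertices, is the isomorphism. It sends `f_α x = h_v (j_α x)` to `(P_K (j_α x), 0)`, the
image of `x` under the arrow of `Φ_v⁻ Φ_v⁺ (H, f)`, and `j_α x - P_K (j_α x) ∈ ker h_v`. -/

open Submodule

namespace ContinuousLinearMap

variable {𝕜 X Y : Type*} [RCLike 𝕜] [NormedAddCommGroup X] [InnerProductSpace 𝕜 X]
  [NormedAddCommGroup Y] [InnerProductSpace 𝕜 Y] (T : X →L[𝕜] Y)

noncomputable def orthogonalSplitting :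
    WithLp 2 ((LinearMap.ker T.toLinearMap)ᗮ × (LinearMap.range T.toLinearMap)ᗮ) →L[𝕜] Y :=
  ((T.comp (subtypeL _)).coprod (subtypeL _)).comp
    (WithLp.prodContinuousLinearEquiv 2 𝕜 _ _).toContinuousLinearMap

@[simp]
theorem orthogonalSplitting_apply
    (z : WithLp 2 ((LinearMap.ker T.toLinearMap)ᗮ × (LinearMap.range T.toLinearMap)ᗮ)) :
    T.orthogonalSplitting z = T z.fst + z.snd :=
  rfl

theorem orthogonalSplitting_injective : Function.Injective T.orthogonalSplitting := by
  refine (injective_iff_map_eq_zero _).2 ?_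
  rintro ⟨p, q⟩ hpq
  have hq : T p = -q := eq_neg_of_add_eq_zero_left hpq
  have hTp : T p = 0 := by
    have : T p ∈ LinearMap.range T.toLinearMap ⊓ (LinearMap.range T.toLinearMap)ᗮ :=
      ⟨LinearMap.mem_range_self T.toLinearMap p, hq ▸ neg_mem q.2⟩
    simpa [inf_orthogonal_eq_bot] using this
  have hp : (p : X) = 0 := by
    have : (p : X) ∈ LinearMap.ker T.toLinearMap ⊓ (LinearMap.ker T.toLinearMap)ᗮ := ⟨hTp, p.2⟩
    simpa [inf_orthogonal_eq_bot] using this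
  have hq' : (q : Y) = 0 := by rw [← neg_eq_zero, ← hq, hTp]
  rw [show p = 0 from Subtype.ext hp, show q = 0 from Subtype.ext hq']
  rfl

variable [CompleteSpace X]

theorem sub_starProjection_ker_orthogonal_mem_ker (x : X) :
    x - (LinearMap.ker T.toLinearMap)ᗮ.starProjection x ∈ LinearMap.ker T.toLinearMap := by
  simpa only [orthogonal_orthogonal] using
    sub_starProjection_mem_orthogonal (K := (LinearMap.ker T.toLinearMap)ᗮ) x

theorem map_starProjection_ker_orthogonal (x : X) :
    T ((LinearMap.ker T.toLinearMap)ᗮ.starProjection x) = T x := by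
  have := T.sub_starProjection_ker_orthogonal_mem_ker x
  rw [LinearMap.mem_ker, map_sub, sub_eq_zero] at this
  exact this.symm

theorem orthogonalSplitting_surjective [CompleteSpace Y]
    (hT : IsClosed (LinearMap.range T.toLinearMap : Set Y)) :
    Function.Surjective T.orthogonalSplitting := by
  have := hT.completeSpace_coe
  intro y
  obtain ⟨x, hx⟩ := ((LinearMap.range T.toLinearMap).orthogonalProjectionOnto y).2
  refine ⟨WithLp.toLp 2 ((LinearMap.ker T.toLinearMap)ᗮ.orthogonalProjectionOnto x,
    (LinearMap.range T.toLinearMap)ᗮ.orthogonalProjectionOnto y), ?_⟩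
  rw [orthogonalSplitting_apply]
  simp only [WithLp.toLp_fst, WithLp.toLp_snd, coe_orthogonalProjectionOnto_apply,
    map_starProjection_ker_orthogonal]
  rw [show T x = _ from hx]
  exact starProjection_add_starProjection_orthogonal y

noncomputable def orthogonalSplittingEquiv [CompleteSpace Y]
    (hT : IsClosed (LinearMap.range T.toLinearMap : Set Y)) :
    WithLp 2 ((LinearMap.ker T.toLinearMap)ᗮ × (LinearMap.range T.toLinearMap)ᗮ) ≃L[𝕜] Y :=
  .ofBijective T.orthogonalSplitting (LinearMap.ker_eq_bot.2 T.orthogonalSplitting_injective)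
    (LinearMap.range_eq_top.2 (T.orthogonalSplitting_surjective hT))

theorem orthogonalSplittingEquiv_symm_apply_map [CompleteSpace Y]
    (hT : IsClosed (LinearMap.range T.toLinearMap : Set Y)) (x : X) :
    (T.orthogonalSplittingEquiv hT).symm (T x) =
      WithLp.toLp 2 ((LinearMap.ker T.toLinearMap)ᗮ.orthogonalProjectionOnto x, 0) := by
  rw [ContinuousLinearEquiv.symm_apply_eq]
  change T x = T.orthogonalSplitting _
  simp only [orthogonalSplitting_apply, WithLp.toLp_fst, WithLp.toLp_snd,
    coe_orthogonalProjectionOnto_apply, map_starProjection_ker_orthogonal, ZeroMemClass.coe_zero,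
    add_zero]

end ContinuousLinearMap

theorem eqRec_zero {V : Type*} {H : V → Type*} [∀ u, Zero (H u)] {u w : V} (e : u = w) :
    (e ▸ (0 : H u) : H w) = 0 := by
  subst e
  rfl

theorem sum_eqRec_apply_single {R V E : Type*} [Semiring R] [Fintype E] [DecidableEq E]
    [DecidableEq V] {s r : E → V} {v : V} {H : V → Type*} [∀ u, AddCommMonoid (H u)] [∀ u, Module R (H u)]
    [∀ u, TopologicalSpace (H u)] (f : ∀ e, H (s e) →L[R] H (r e)) (a : {e // r e = v})
    (x : H (s a.1)) :
    ∑ b : {e // r e = v}, (b.2 ▸ f b.1 (Pi.single (M := fun b ↦ H (s b.1)) a x b) : H v) =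
      a.2 ▸ f a.1 x := by
  rw [Fintype.sum_eq_single a fun b hb => by rw [Pi.single_eq_of_ne hb, map_zero, eqRec_zero],
    Pi.single_eq_same]

theorem reflection_decomposition_at_closed_sink_general
    {V E : Type} [Fintype E] [DecidableEq V] [DecidableEq E] (s r : E → V)
    (H : V → Type) [∀ u, NormedAddCommGroup (H u)] [∀ u, InnerProductSpace ℂ (H u)]
    [∀ u, CompleteSpace (H u)]
    (f : ∀ e, H (s e) →L[ℂ] H (r e)) (v : V)
    (h : PiLp 2 (fun a : {e : E // r e = v} => H (s a.1)) →L[ℂ] H v)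
    (hh : ∀ x, h x = ∑ a : {e : E // r e = v}, (a.2 ▸ (f a.1 (x a)) : H v))
    (hclosed : IsClosed (LinearMap.range h.toLinearMap : Set (H v))) :
    ∃ (φ : ∀ u, H u ≃L[ℂ] H u)
      (φv : H v ≃L[ℂ] WithLp 2 (↥((LinearMap.ker h.toLinearMap)ᗮ) × ↥((LinearMap.range h.toLinearMap)ᗮ))),
      (∀ (a : {e : E // r e = v}) (x : H (s a.1)),
        ((WithLp.equiv 2 _) (φv (a.2 ▸ (f a.1 x) : H v))).2 = 0 ∧
        ((WithLp.equiv 2 (∀ b : {e : E // r e = v}, H (s b.1))).symm (Pi.single a (φ (s a.1) x)) -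
            (((WithLp.equiv 2 _) (φv (a.2 ▸ (f a.1 x) : H v))).1 :
              PiLp 2 (fun a : {e : E // r e = v} => H (s a.1)))) ∈ LinearMap.ker h.toLinearMap) ∧
      ∀ e : E, r e ≠ v → ∀ x, φ (r e) (f e x) = f e (φ (s e) x) := by
  refine ⟨fun u => ContinuousLinearEquiv.refl ℂ (H u), (h.orthogonalSplittingEquiv hclosed).symm,
    fun a x => ?_, fun _ _ _ => rfl⟩
  have hsingle : h (WithLp.toLp 2 (Pi.single a x)) = a.2 ▸ f a.1 x := by
    rw [hh]
    exact sum_eqRec_apply_single f a x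
  rw [← hsingle, h.orthogonalSplittingEquiv_symm_apply_map]
  exact ⟨rfl, h.sub_starProjection_ker_orthogonal_mem_ker _⟩

/-- Let `v` be a sink of a finite quiver and `(H,f)` a Hilbert
representation that is closed at `v`.  With `h_v : ⊕₂_{α ∈ Eᵛ} H_{s(α)} → H_v`,
`h_v((x_α)) = Σ f_α(x_α)`, one has `(H,f) ≅ Φᵥ⁻(Φᵥ⁺(H,f)) ⊕ (H̃,f̃)`, where
`Φᵥ⁻(Φᵥ⁺(H,f))` has vertex space `(Ker h_v)^⊥` at `v` with arrow operators
`P_{(Ker h_v)^⊥} ∘ j_α` for `α ∈ Eᵛ` (other data unchanged), and `H̃` is concentrated at `v`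
with space `(Im h_v)^⊥` and zero operators. -/
theorem reflection_decomposition_at_closed_sink
    {V E : Type} [Fintype V] [Fintype E] [DecidableEq V] [DecidableEq E] (s r : E → V)
    (H : V → Type) [∀ u, NormedAddCommGroup (H u)] [∀ u, InnerProductSpace ℂ (H u)]
    [∀ u, CompleteSpace (H u)]
    (f : ∀ e, H (s e) →L[ℂ] H (r e)) (v : V)
    (hsink : ∀ e, s e ≠ v)
    (h : PiLp 2 (fun a : {e : E // r e = v} => H (s a.1)) →L[ℂ] H v)
    (hh : ∀ x, h x = ∑ a : {e : E // r e = v}, (a.2 ▸ (f a.1 (x a)) : H v))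
    (hclosed : IsClosed (LinearMap.range h.toLinearMap : Set (H v))) :
    ∃ (φ : ∀ u, H u ≃L[ℂ] H u)
      (φv : H v ≃L[ℂ] WithLp 2 (↥((LinearMap.ker h.toLinearMap)ᗮ) × ↥((LinearMap.range h.toLinearMap)ᗮ))),
      (∀ (a : {e : E // r e = v}) (x : H (s a.1)),
        ((WithLp.equiv 2 _) (φv (a.2 ▸ (f a.1 x) : H v))).2 = 0 ∧
        ((WithLp.equiv 2 (∀ b : {e : E // r e = v}, H (s b.1))).symm (Pi.single a (φ (s a.1) x)) -
            (((WithLp.equiv 2 _) (φv (a.2 ▸ (f a.1 x) : H v))).1 :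
              PiLp 2 (fun a : {e : E // r e = v} => H (s a.1)))) ∈ LinearMap.ker h.toLinearMap) ∧
      ∀ e : E, r e ≠ v → ∀ x, φ (r e) (f e x) = f e (φ (s e) x) :=
  reflection_decomposition_at_closed_sink_general s r H f v h hh hclosed
end

section
/- Let Γ be a finite quiver and v a sink. If a Hilbert representation (H,f) of Γ is full at v (i.e., Σ_{α∈E^v} Im f_α = H_v), then (H,f) ≅ Φ_v⁻(Φ_v⁺(H,f)). -/
/-!
In the statement, `Φᵥ⁻(Φᵥ⁺(H,f))` has vertex space `(Ker h_v)ᗮ` at `v` and arrow operators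
`P_{(Ker h_v)ᗮ} ∘ j_α` into it; the first conjunct says `φv ∘ f_α = P_{(Ker h_v)ᗮ} ∘ j_α ∘ φ`,
written as `j_α x - φv (f_α x) ∈ Ker h_v`.

Fullness makes `h_v` surjective, so it restricts to a bounded isomorphism
`(Ker h_v)ᗮ ≃ H_v` (open mapping theorem). Its inverse, with the identity at all other vertices,
is the isomorphism: `j_α x` and its projection to `(Ker h_v)ᗮ` differ by an element of `Ker h_v`,
so both are mapped to `f_α x` by `h_v`.
-/

open Function

namespace ContinuousLinearMap

variable {𝕜 E F : Type*} [NontriviallyNormedField 𝕜] [NormedAddCommGroup E] [NormedSpace 𝕜 E]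
  [NormedAddCommGroup F] [NormedSpace 𝕜 F] [CompleteSpace F]

noncomputable def equivOfIsComplKer (f : E →L[𝕜] F) (hf : Surjective f)
    {C : Submodule 𝕜 E} [CompleteSpace C] (hC : IsCompl C f.ker) : C ≃L[𝕜] F :=
  .ofBijective (f ∘L C.subtypeL)
    (LinearMap.ker_eq_bot.2 (LinearMap.injective_domRestrict_iff.2 hC.disjoint))
    (LinearMap.range_eq_top.2 ((LinearMap.surjective_domRestrict_iff hf).2 hC.codisjoint))

theorem sub_equivOfIsComplKer_symm_apply_mem_ker (f : E →L[𝕜] F) (hf : Surjective f)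
    {C : Submodule 𝕜 E} [CompleteSpace C] (hC : IsCompl C f.ker) (x : E) :
    x - (f.equivOfIsComplKer hf hC).symm (f x) ∈ f.ker := by
  rw [LinearMap.mem_ker, map_sub, sub_eq_zero]
  exact ((f.equivOfIsComplKer hf hC).apply_symm_apply (f x)).symm

end ContinuousLinearMap

theorem duality_at_full_sink_general
    {V E : Type} [Fintype E] [DecidableEq V] [DecidableEq E] (s r : E → V)
    (H : V → Type) [∀ u, NormedAddCommGroup (H u)] [∀ u, InnerProductSpace ℂ (H u)]
    [∀ u, CompleteSpace (H u)]
    (f : ∀ e, H (s e) →L[ℂ] H (r e)) (v : V)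
    (h : PiLp 2 (fun a : {e : E // r e = v} => H (s a.1)) →L[ℂ] H v)
    (hh : ∀ x, h x = ∑ a : {e : E // r e = v}, (a.2 ▸ (f a.1 (x a)) : H v))
    (hfull : LinearMap.range h.toLinearMap = ⊤) :
    ∃ (φ : ∀ u, H u ≃L[ℂ] H u) (φv : H v ≃L[ℂ] ↥((LinearMap.ker h.toLinearMap)ᗮ)),
      (∀ (a : {e : E // r e = v}) (x : H (s a.1)),
        ((WithLp.equiv 2 (∀ b : {e : E // r e = v}, H (s b.1))).symm
            (Pi.single a (φ (s a.1) x)) -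
          (φv (a.2 ▸ (f a.1 x) : H v) :
            PiLp 2 (fun a : {e : E // r e = v} => H (s a.1)))) ∈ LinearMap.ker h.toLinearMap) ∧
      ∀ e : E, r e ≠ v → ∀ x, φ (r e) (f e x) = f e (φ (s e) x) := by
  have hsurj : Surjective h := LinearMap.range_eq_top.1 hfull
  have hC : IsCompl h.kerᗮ h.ker := (Submodule.isCompl_orthogonal _).symm
  refine ⟨fun u => .refl ℂ (H u), (h.equivOfIsComplKer hsurj hC).symm, fun a x => ?_,
    fun _ _ _ => rfl⟩
  set y := (WithLp.equiv 2 (∀ b : {e : E // r e = v}, H (s b.1))).symm (Pi.single a x)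
  have hy : h y = (a.2 ▸ f a.1 x : H v) := by
    rw [hh, Fintype.sum_eq_single a]
    · simp [y]
    · rintro ⟨e, rfl⟩ hb
      simp [y, Pi.single_eq_of_ne hb]
  have hker := h.sub_equivOfIsComplKer_symm_apply_mem_ker hsurj hC y
  rwa [hy] at hker

/-- **Duality theorem at a sink.** Let `v` be a sink of a finite quiver and
`(H,f)` a Hilbert representation that is full at `v` (the operator
`h_v : ⊕₂_{α ∈ Eᵛ} H_{s(α)} → H_v`, `h_v((x_α)) = Σ f_α(x_α)`, is onto).  Then
`(H,f) ≅ Φᵥ⁻(Φᵥ⁺(H,f))`, the latter having vertex space `(Ker h_v)^⊥` at `v` with arrow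
operators `P_{(Ker h_v)^⊥} ∘ j_α` for `α ∈ Eᵛ`, other data unchanged. -/
theorem duality_at_full_sink
    {V E : Type} [Fintype V] [Fintype E] [DecidableEq V] [DecidableEq E] (s r : E → V)
    (H : V → Type) [∀ u, NormedAddCommGroup (H u)] [∀ u, InnerProductSpace ℂ (H u)]
    [∀ u, CompleteSpace (H u)]
    (f : ∀ e, H (s e) →L[ℂ] H (r e)) (v : V)
    (hsink : ∀ e, s e ≠ v)
    (h : PiLp 2 (fun a : {e : E // r e = v} => H (s a.1)) →L[ℂ] H v)
    (hh : ∀ x, h x = ∑ a : {e : E // r e = v}, (a.2 ▸ (f a.1 (x a)) : H v))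
    (hfull : LinearMap.range h.toLinearMap = ⊤) :
    ∃ (φ : ∀ u, H u ≃L[ℂ] H u) (φv : H v ≃L[ℂ] ↥((LinearMap.ker h.toLinearMap)ᗮ)),
      (∀ (a : {e : E // r e = v}) (x : H (s a.1)),
        ((WithLp.equiv 2 (∀ b : {e : E // r e = v}, H (s b.1))).symm
            (Pi.single a (φ (s a.1) x)) -
          (φv (a.2 ▸ (f a.1 x) : H v) :
            PiLp 2 (fun a : {e : E // r e = v} => H (s a.1)))) ∈ LinearMap.ker h.toLinearMap) ∧
      ∀ e : E, r e ≠ v → ∀ x, φ (r e) (f e x) = f e (φ (s e) x) :=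
  duality_at_full_sink_general s r H f v h hh hfull
end

section
/- Let Γ be a finite quiver and v a source. If a Hilbert representation (H,f) of Γ is co-full at v (i.e., Σ_{α∈E_v} Im f_α* = H_v), then (H,f) ≅ Φ_v⁺(Φ_v⁻(H,f)). -/
set_option synthInstance.maxHeartbeats 400000

/-- A finite `ℓ²`-direct sum of complete spaces is complete. -/
instance piLp_completeSpace {p : ENNReal} {ι : Type} (H : ι → Type)
    [∀ i, NormedAddCommGroup (H i)] [∀ i, CompleteSpace (H i)] : CompleteSpace (PiLp p H) :=
  (PiLp.uniformEquiv p H).completeSpace_iff.2 inferInstance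

/-!
Co-fullness at `v` says that `ĥ_v*` is onto. By the open mapping theorem every `x` is then
`ĥ_v* z` with `‖z‖ ≤ C ‖x‖`, and `‖x‖² = ⟪z, ĥ_v x⟫ ≤ C ‖x‖ ‖ĥ_v x‖` shows that `ĥ_v` is bounded
below. Hence `ĥ_v` is injective with closed range, so `((Im ĥ_v)^⊥)^⊥ = Im ĥ_v` and `ĥ_v`
itself is an isomorphism of `H_v` onto the vertex space of `Φᵥ⁺(Φᵥ⁻(H,f))` at `v`; at all other
vertices the identity does the job.
-/

open Function

namespace ContinuousLinearMap

variable {𝕜 E F : Type*} [RCLike 𝕜] [NormedAddCommGroup E] [InnerProductSpace 𝕜 E]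
  [NormedAddCommGroup F] [InnerProductSpace 𝕜 F] [CompleteSpace E] [CompleteSpace F]
  {T : E →L[𝕜] F}

theorem exists_antilipschitzWith_of_surjective_adjoint (hT : Surjective (adjoint T)) :
    ∃ K, AntilipschitzWith K T := by
  obtain ⟨C, hC, hpre⟩ := (adjoint T).exists_preimage_norm_le hT
  refine ⟨C.toNNReal, T.antilipschitz_of_bound fun x ↦ ?_⟩
  rw [Real.coe_toNNReal _ hC.le]
  obtain ⟨z, rfl, hz⟩ := hpre x
  rcases (norm_nonneg (adjoint T z)).eq_or_lt with hx | hx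
  · rw [← hx]
    positivity
  refine le_of_mul_le_mul_right ?_ hx
  calc ‖adjoint T z‖ * ‖adjoint T z‖ = RCLike.re (inner 𝕜 (adjoint T z) (adjoint T z)) :=
        (inner_self_eq_norm_mul_norm _).symm
    _ = RCLike.re (inner 𝕜 z (T (adjoint T z))) := by rw [adjoint_inner_left]
    _ ≤ ‖(inner 𝕜 z (T (adjoint T z)) : 𝕜)‖ := RCLike.re_le_norm _
    _ ≤ ‖z‖ * ‖T (adjoint T z)‖ := norm_inner_le_norm _ _
    _ ≤ C * ‖adjoint T z‖ * ‖T (adjoint T z)‖ := by gcongr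
    _ = C * ‖T (adjoint T z)‖ * ‖adjoint T z‖ := by ring

theorem injective_of_surjective_adjoint (hT : Surjective (adjoint T)) : Injective T :=
  (exists_antilipschitzWith_of_surjective_adjoint hT).choose_spec.injective

theorem isClosed_range_of_surjective_adjoint (hT : Surjective (adjoint T)) :
    IsClosed (Set.range T) :=
  (exists_antilipschitzWith_of_surjective_adjoint hT).choose_spec.isClosed_range
    T.uniformContinuous

theorem orthogonal_orthogonal_range_of_surjective_adjoint (hT : Surjective (adjoint T)) :
    (LinearMap.range T.toLinearMap)ᗮᗮ = LinearMap.range T.toLinearMap := by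
  rw [Submodule.orthogonal_orthogonal_eq_closure]
  exact IsClosed.submodule_topologicalClosure_eq (isClosed_range_of_surjective_adjoint hT)

theorem exists_equiv_orthogonal_orthogonal_range_of_surjective_adjoint
    (hT : Surjective (adjoint T)) :
    ∃ e : E ≃L[𝕜] (LinearMap.range T.toLinearMap)ᗮᗮ, ∀ x, (e x : F) = T x :=
  ⟨(T.equivRange (injective_of_surjective_adjoint hT)
      (isClosed_range_of_surjective_adjoint hT)).trans
    (.ofEq _ _ (orthogonal_orthogonal_range_of_surjective_adjoint hT).symm), fun _ ↦ rfl⟩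

end ContinuousLinearMap

theorem duality_at_cofull_source_general
    {V E : Type} [Fintype E] [DecidableEq V] (s r : E → V)
    (H : V → Type) [∀ u, NormedAddCommGroup (H u)] [∀ u, InnerProductSpace ℂ (H u)]
    [∀ u, CompleteSpace (H u)]
    (f : ∀ e, H (s e) →L[ℂ] H (r e)) (v : V)
    (hhat : H v →L[ℂ] PiLp 2 (fun a : {e : E // s e = v} => H (r a.1)))
    (hhh : ∀ (x : H v) (a : {e : E // s e = v}), hhat x a = f a.1 (a.2.symm ▸ x : H (s a.1)))
    (hcofull : LinearMap.range (ContinuousLinearMap.adjoint hhat).toLinearMap = ⊤) :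
    ∃ (φ : ∀ u, H u ≃L[ℂ] H u) (φv : H v ≃L[ℂ] ↥(((LinearMap.range hhat.toLinearMap)ᗮ)ᗮ)),
      (∀ (x : H v) (a : {e : E // s e = v}),
        (φv x : PiLp 2 (fun a : {e : E // s e = v} => H (r a.1))) a
          = φ (r a.1) (f a.1 (a.2.symm ▸ x : H (s a.1)))) ∧
      ∀ e : E, s e ≠ v → ∀ x, φ (r e) (f e x) = f e (φ (s e) x) := by
  obtain ⟨φv, hφv⟩ :=
    ContinuousLinearMap.exists_equiv_orthogonal_orthogonal_range_of_surjective_adjoint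
      (LinearMap.range_eq_top.mp hcofull)
  refine ⟨fun u ↦ .refl ℂ (H u), φv, fun x a ↦ ?_, fun _ _ _ ↦ rfl⟩
  rw [hφv, hhh]
  rfl

/-- **Duality theorem at a source.** Let `v` be a source of a finite quiver and
`(H,f)` a Hilbert representation that is co-full at `v` (the adjoint of
`ĥ_v : H_v → ⊕₂_{α ∈ E_v} H_{r(α)}`, `ĥ_v(x) = (f_α(x))_α`, is onto, i.e.
`Σ_{α ∈ E_v} Im f_α* = H_v`).  Then `(H,f) ≅ Φᵥ⁺(Φᵥ⁻(H,f))`, the latter having vertex space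
`((Im ĥ_v)^⊥)^⊥` at `v`, with the arrow operator for `α ∈ E_v` given by the `α`-th coordinate
projection, other data unchanged. -/
theorem duality_at_cofull_source
    {V E : Type} [Fintype V] [Fintype E] [DecidableEq V] [DecidableEq E] (s r : E → V)
    (H : V → Type) [∀ u, NormedAddCommGroup (H u)] [∀ u, InnerProductSpace ℂ (H u)]
    [∀ u, CompleteSpace (H u)]
    (f : ∀ e, H (s e) →L[ℂ] H (r e)) (v : V)
    (hsource : ∀ e, r e ≠ v)
    (hhat : H v →L[ℂ] PiLp 2 (fun a : {e : E // s e = v} => H (r a.1)))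
    (hhh : ∀ (x : H v) (a : {e : E // s e = v}), hhat x a = f a.1 (a.2.symm ▸ x : H (s a.1)))
    (hcofull : LinearMap.range (ContinuousLinearMap.adjoint hhat).toLinearMap = ⊤) :
    ∃ (φ : ∀ u, H u ≃L[ℂ] H u) (φv : H v ≃L[ℂ] ↥(((LinearMap.range hhat.toLinearMap)ᗮ)ᗮ)),
      (∀ (x : H v) (a : {e : E // s e = v}),
        (φv x : PiLp 2 (fun a : {e : E // s e = v} => H (r a.1))) a
          = φ (r a.1) (f a.1 (a.2.symm ▸ x : H (s a.1)))) ∧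
      ∀ e : E, s e ≠ v → ∀ x, φ (r e) (f e x) = f e (φ (s e) x) :=
  duality_at_cofull_source_general s r H f v hhat hhh hcofull
end

section
/- Let Γ be a finite quiver with sink v and let (H,f) be an indecomposable Hilbert representation which is closed at v and satisfies Φ_v⁺(H,f) ≠ 0. Then Φ_v⁺(H,f) is indecomposable and (H,f) ≅ Φ_v⁻(Φ_v⁺(H,f)). -/
/-!
Because `Im h_v` is closed, the orthogonal projection onto it, extended by the identity at the
other vertices, is an idempotent endomorphism of `(H, f)`: every `f_α` with target `v` lands in
`Im h_v`. Were it `0`, every `H_u` with `u ≠ v`, and with them `Ker h_v`, would vanish, i.e.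
`Φᵥ⁺(H,f) = 0`; so it is `I` and `h_v` is onto. Then `h_v` maps `(Ker h_v)^⊥` isomorphically onto
`H_v`, which is the isomorphism `(H,f) ≅ Φᵥ⁻Φᵥ⁺(H,f)`. An idempotent endomorphism of `Φᵥ⁺(H,f)`
acts on `⨁ H_{s α}` preserving `Ker h_v`, so it descends along `h_v` to an idempotent endomorphism
of `(H, f)`, which is `0` or `I`.
-/

open Function

namespace ContinuousLinearMap

variable {𝕜 X Y Z : Type*} [RCLike 𝕜] [NormedAddCommGroup X] [InnerProductSpace 𝕜 X]
  [CompleteSpace X] [NormedAddCommGroup Y] [NormedSpace 𝕜 Y] [CompleteSpace Y]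
  [NormedAddCommGroup Z] [NormedSpace 𝕜 Z]

noncomputable def orthogonalKerEquiv (h : X →L[𝕜] Y) (hsurj : Surjective h) :
    h.kerᗮ ≃L[𝕜] Y :=
  .ofBijective (h ∘L h.kerᗮ.subtypeL)
    (by
      rw [LinearMap.ker_eq_bot']
      intro p hp
      exact Subtype.ext <| (Submodule.inf_orthogonal_eq_bot h.ker).le ⟨hp, p.2⟩)
    (by
      rw [LinearMap.range_eq_top]
      intro y
      obtain ⟨x, rfl⟩ := hsurj y
      obtain ⟨k, hk, p, hp, rfl⟩ := h.ker.exists_add_mem_mem_orthogonal x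
      exact ⟨⟨p, hp⟩, by simp [show h k = 0 from hk]⟩)

variable {h : X →L[𝕜] Y}

@[simp]
theorem apply_orthogonalKerEquiv_symm (hsurj : Surjective h) (y : Y) :
    h ((h.orthogonalKerEquiv hsurj).symm y) = y :=
  (h.orthogonalKerEquiv hsurj).apply_symm_apply y

theorem sub_orthogonalKerEquiv_symm_apply_mem_ker (hsurj : Surjective h) (x : X) :
    x - (h.orthogonalKerEquiv hsurj).symm (h x) ∈ h.ker := by
  simp

theorem exists_comp_eq_of_ker_le (hsurj : Surjective h) (g : X →L[𝕜] Z) (hg : h.ker ≤ g.ker) :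
    ∃ g' : Y →L[𝕜] Z, g' ∘L h = g := by
  refine ⟨g ∘L h.kerᗮ.subtypeL ∘L (h.orthogonalKerEquiv hsurj).symm, ?_⟩
  ext x
  have := hg (sub_orthogonalKerEquiv_symm_apply_mem_ker hsurj x)
  rw [LinearMap.mem_ker, map_sub, sub_eq_zero] at this
  exact this.symm

end ContinuousLinearMap

namespace PiLp

variable {𝕜 ι : Type*} [Semiring 𝕜] {α β : ι → Type*} (p : ENNReal)
  [∀ i, SeminormedAddCommGroup (α i)] [∀ i, Module 𝕜 (α i)]
  [∀ i, SeminormedAddCommGroup (β i)] [∀ i, Module 𝕜 (β i)]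

def piMap (T : ∀ i, α i →L[𝕜] β i) : PiLp p α →L[𝕜] PiLp p β :=
  (continuousLinearEquiv p 𝕜 β).symm.toContinuousLinearMap ∘L ContinuousLinearMap.piMap T ∘L
    (continuousLinearEquiv p 𝕜 α).toContinuousLinearMap

@[simp]
theorem piMap_apply (T : ∀ i, α i →L[𝕜] β i) (x : PiLp p α) (i : ι) :
    piMap p T x i = T i (x i) :=
  rfl

theorem piMap_single [DecidableEq ι] (T : ∀ i, α i →L[𝕜] β i) (i : ι) (x : α i) :
    piMap p T (single p i x) = single p i (T i x) := by
  ext j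
  obtain rfl | hj := eq_or_ne j i
  · simp
  · simp [single_eq_of_ne p hj]

end PiLp

theorem isIdempotentElem_update {ι : Type*} {M : ι → Type*} [DecidableEq ι] [∀ i, Mul (M i)]
    {T : ∀ i, M i} {i : ι} {x : M i} (hT : ∀ j, j ≠ i → IsIdempotentElem (T j))
    (hx : IsIdempotentElem x) (j : ι) : IsIdempotentElem (update T i x j) := by
  obtain rfl | hj := eq_or_ne j i
  · rwa [update_self]
  · rw [update_of_ne hj]
    exact hT j hj

section SinkReflection

variable {V E : Type} [DecidableEq V] [Fintype E] [DecidableEq E] {s r : E → V}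
  {H : V → Type} [∀ u, NormedAddCommGroup (H u)] [∀ u, InnerProductSpace ℂ (H u)]
  {f : ∀ e, H (s e) →L[ℂ] H (r e)} {v : V}
  {h : PiLp 2 (fun a : {e : E // r e = v} => H (s a.1)) →L[ℂ] H v}

variable (f) in
def IsIndecomposableRep : Prop :=
  ∀ T : ∀ u, H u →L[ℂ] H u, (∀ e x, T (r e) (f e x) = f e (T (s e) x)) →
    (∀ u, (T u).comp (T u) = T u) →
    (∀ u, T u = 0) ∨ (∀ u, T u = ContinuousLinearMap.id ℂ (H u))

theorem apply_single_of_eq_sum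
    (hh : ∀ x, h x = ∑ a : {e : E // r e = v}, (a.2 ▸ (f a.1 (x a)) : H v))
    (a : {e : E // r e = v}) (x : H (s a.1)) : h (PiLp.single 2 a x) = a.2 ▸ f a.1 x := by
  rw [hh, Finset.sum_eq_single a, PiLp.single_eq_same]
  · rintro ⟨b, rfl⟩ - hb
    rw [PiLp.single_eq_of_ne 2 hb, map_zero]
  · simp

theorem update_comm_arrow_of_comp_eq (hsink : ∀ e, s e ≠ v)
    (hh : ∀ x, h x = ∑ a : {e : E // r e = v}, (a.2 ▸ (f a.1 (x a)) : H v))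
    {T : ∀ u, H u →L[ℂ] H u} {Tv : H v →L[ℂ] H v}
    (hT : ∀ e, r e ≠ v → ∀ x, T (r e) (f e x) = f e (T (s e) x))
    (hTv : Tv ∘L h = h ∘L PiLp.piMap 2 (fun a => T (s a.1))) (e : E) (x : H (s e)) :
    update T v Tv (r e) (f e x) = f e (update T v Tv (s e) x) := by
  rw [update_of_ne (hsink e)]
  by_cases hre : r e = v
  · subst hre
    have hsingle : ∀ y, h (PiLp.single 2 ⟨e, rfl⟩ y) = f e y :=
      apply_single_of_eq_sum hh ⟨e, rfl⟩
    rw [update_self, ← hsingle, ← ContinuousLinearMap.comp_apply, hTv,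
      ContinuousLinearMap.comp_apply, PiLp.piMap_single, hsingle]
  · rw [update_of_ne hre, hT e hre]

variable [∀ u, CompleteSpace (H u)]

theorem surjective_of_isClosed_range (hsink : ∀ e, s e ≠ v)
    (hh : ∀ x, h x = ∑ a : {e : E // r e = v}, (a.2 ▸ (f a.1 (x a)) : H v))
    (hclosed : IsClosed (h.range : Set (H v))) (hindec : IsIndecomposableRep f)
    (hne : ¬ ∀ u, u ≠ v → ∀ x : H u, x = 0) : Surjective h := by
  have : h.range.HasOrthogonalProjection := by
    have := hclosed.completeSpace_coe
    infer_instance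
  have hP : h.range.starProjection ∘L h =
      h ∘L PiLp.piMap 2 (fun a => ContinuousLinearMap.id ℂ (H (s a.1))) := by
    ext x
    exact Submodule.starProjection_eq_self_iff.mpr ⟨x, rfl⟩
  rcases hindec _
      (update_comm_arrow_of_comp_eq (T := fun u => ContinuousLinearMap.id ℂ (H u)) hsink hh
        (fun _ _ _ => rfl) hP)
      (isIdempotentElem_update (fun _ _ => ContinuousLinearMap.id_comp _)
        h.range.isIdempotentElem_starProjection) with h0 | h1
  · refine absurd (fun u hu x => ?_) hne
    simpa [update_of_ne hu] using congr($(h0 u) x)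
  · intro y
    have := congr($(h1 v) y)
    rw [update_self] at this
    exact Submodule.starProjection_eq_self_iff.mp this

theorem reflection_at_sink_isIndecomposable (hsink : ∀ e, s e ≠ v)
    (hh : ∀ x, h x = ∑ a : {e : E // r e = v}, (a.2 ▸ (f a.1 (x a)) : H v))
    (hsurj : Surjective h) (hindec : IsIndecomposableRep f)
    (Tv : h.ker →L[ℂ] h.ker) (T : ∀ u, H u →L[ℂ] H u)
    (hTv : ∀ (a : {e : E // r e = v}) (k : h.ker),
      T (s a.1) ((k : PiLp 2 (fun b : {e : E // r e = v} => H (s b.1))) a) =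
        ((Tv k : h.ker) : PiLp 2 (fun b : {e : E // r e = v} => H (s b.1))) a)
    (hT : ∀ e, r e ≠ v → ∀ x, T (r e) (f e x) = f e (T (s e) x))
    (hT2 : ∀ u, u ≠ v → (T u).comp (T u) = T u) :
    (Tv = 0 ∧ ∀ u, u ≠ v → T u = 0) ∨
      (Tv = ContinuousLinearMap.id ℂ h.ker ∧
        ∀ u, u ≠ v → T u = ContinuousLinearMap.id ℂ (H u)) := by
  set D := PiLp.piMap 2 (fun a : {e : E // r e = v} => T (s a.1))
  have hD : ∀ k : h.ker, D k = Tv k := fun k => PiLp.ext (hTv · k)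
  obtain ⟨Tv', hTv'⟩ := ContinuousLinearMap.exists_comp_eq_of_ker_le hsurj (h ∘L D)
    fun x hx => by
    simp [hD ⟨x, hx⟩]
  have hD2 : D ∘L D = D := by
    ext x a
    exact congr($(hT2 _ (hsink a.1)) (x a))
  have hTv'2 : Tv' ∘L Tv' = Tv' := by
    have : (Tv' ∘L Tv') ∘L h = Tv' ∘L h := calc
      (Tv' ∘L Tv') ∘L h = Tv' ∘L (h ∘L D) := by rw [ContinuousLinearMap.comp_assoc, hTv']
      _ = h ∘L (D ∘L D) := by
        rw [← ContinuousLinearMap.comp_assoc, hTv', ContinuousLinearMap.comp_assoc]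
      _ = Tv' ∘L h := by rw [hD2, hTv']
    ext y
    obtain ⟨x, rfl⟩ := hsurj y
    exact congr($this x)
  rcases hindec _ (update_comm_arrow_of_comp_eq hsink hh hT hTv')
      (isIdempotentElem_update hT2 hTv'2) with h0 | h1
  · have hT0 : ∀ u, u ≠ v → T u = 0 := fun u hu => by simpa [update_of_ne hu] using h0 u
    refine .inl ⟨?_, hT0⟩
    ext k a
    simp [← hTv, hT0 _ (hsink a.1)]
  · have hT1 : ∀ u, u ≠ v → T u = ContinuousLinearMap.id ℂ (H u) :=
      fun u hu => by simpa [update_of_ne hu] using h1 u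
    refine .inr ⟨?_, hT1⟩
    ext k a
    simp [← hTv, hT1 _ (hsink a.1)]

theorem single_sub_orthogonalKerEquiv_symm_mem_ker
    (hh : ∀ x, h x = ∑ a : {e : E // r e = v}, (a.2 ▸ (f a.1 (x a)) : H v))
    (hsurj : Surjective h) (a : {e : E // r e = v}) (x : H (s a.1)) :
    PiLp.single 2 a x - ((h.orthogonalKerEquiv hsurj).symm (a.2 ▸ f a.1 x) : PiLp 2 _) ∈
      h.ker := by
  simp [apply_single_of_eq_sum hh]

end SinkReflection

theorem reflection_functor_preserves_indecomposability_at_sink_general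
    {V E : Type} [Fintype E] [DecidableEq V] [DecidableEq E] (s r : E → V)
    (H : V → Type) [∀ u, NormedAddCommGroup (H u)] [∀ u, InnerProductSpace ℂ (H u)]
    [∀ u, CompleteSpace (H u)]
    (f : ∀ e, H (s e) →L[ℂ] H (r e)) (v : V)
    (hsink : ∀ e, s e ≠ v)
    (h : PiLp 2 (fun a : {e : E // r e = v} => H (s a.1)) →L[ℂ] H v)
    (hh : ∀ x, h x = ∑ a : {e : E // r e = v}, (a.2 ▸ (f a.1 (x a)) : H v))
    (hclosed : IsClosed (LinearMap.range h.toLinearMap : Set (H v)))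
    -- `(H,f)` is indecomposable: its only idempotent endomorphisms are `0` and `I`:
    (hindec : ∀ T : ∀ u, H u →L[ℂ] H u,
      (∀ e x, T (r e) (f e x) = f e (T (s e) x)) →
      (∀ u, (T u).comp (T u) = T u) →
      (∀ u, T u = 0) ∨ (∀ u, T u = ContinuousLinearMap.id ℂ (H u)))
    -- `Φᵥ⁺(H,f) ≠ 0`:
    (hne : ¬ ((∀ x : ↥(LinearMap.ker h.toLinearMap), x = 0) ∧ ∀ u, u ≠ v → ∀ x : H u, x = 0)) :
    -- `Φᵥ⁺(H,f)` is indecomposable: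
    (∀ (Tv : ↥(LinearMap.ker h.toLinearMap) →L[ℂ] ↥(LinearMap.ker h.toLinearMap)) (T : ∀ u, H u →L[ℂ] H u),
      (∀ (a : {e : E // r e = v}) (k : ↥(LinearMap.ker h.toLinearMap)),
        T (s a.1) ((k : PiLp 2 (fun b : {e : E // r e = v} => H (s b.1))) a)
          = ((Tv k : ↥(LinearMap.ker h.toLinearMap)) :
              PiLp 2 (fun b : {e : E // r e = v} => H (s b.1))) a) →
      (∀ e : E, r e ≠ v → ∀ x, T (r e) (f e x) = f e (T (s e) x)) →
      Tv.comp Tv = Tv →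
      (∀ u, u ≠ v → (T u).comp (T u) = T u) →
      ((Tv = 0 ∧ ∀ u, u ≠ v → T u = 0) ∨
        (Tv = ContinuousLinearMap.id ℂ ↥(LinearMap.ker h.toLinearMap) ∧
          ∀ u, u ≠ v → T u = ContinuousLinearMap.id ℂ (H u)))) ∧
    -- `(H,f) ≅ Φᵥ⁻(Φᵥ⁺(H,f))`:
    (∃ (φ : ∀ u, H u ≃L[ℂ] H u) (φv : H v ≃L[ℂ] ↥((LinearMap.ker h.toLinearMap)ᗮ)),
      (∀ (a : {e : E // r e = v}) (x : H (s a.1)),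
        ((WithLp.equiv 2 (∀ b : {e : E // r e = v}, H (s b.1))).symm
            (Pi.single a (φ (s a.1) x)) -
          (φv (a.2 ▸ (f a.1 x) : H v) :
            PiLp 2 (fun a : {e : E // r e = v} => H (s a.1)))) ∈ LinearMap.ker h.toLinearMap) ∧
      ∀ e : E, r e ≠ v → ∀ x, φ (r e) (f e x) = f e (φ (s e) x)) := by
  have hsurj : Surjective h := surjective_of_isClosed_range hsink hh hclosed hindec fun h0 =>
    hne ⟨fun k => Subtype.ext (PiLp.ext fun a => h0 _ (hsink a.1) _), h0⟩
  refine ⟨fun Tv T hTv hT _ hT2 =>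
      reflection_at_sink_isIndecomposable hsink hh hsurj hindec Tv T hTv hT hT2,
    fun u => .refl ℂ (H u), (h.orthogonalKerEquiv hsurj).symm,
    fun a x => single_sub_orthogonalKerEquiv_symm_mem_ker hh hsurj a x, fun _ _ _ => rfl⟩

/-- Let `v` be a sink of a finite quiver and `(H,f)` an indecomposable
Hilbert representation which is closed at `v` and satisfies `Φᵥ⁺(H,f) ≠ 0`.  Then
`Φᵥ⁺(H,f)` (vertex space `Ker h_v` at `v`, reversed-arrow operators the coordinate maps
`f⁺_{ᾱ} = P_α ∘ i_v`, other data unchanged) is indecomposable, i.e. its only idempotent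
endomorphisms are `0` and `I`, and `(H,f) ≅ Φᵥ⁻(Φᵥ⁺(H,f))`. -/
theorem reflection_functor_preserves_indecomposability_at_sink
    {V E : Type} [Fintype V] [Fintype E] [DecidableEq V] [DecidableEq E] (s r : E → V)
    (H : V → Type) [∀ u, NormedAddCommGroup (H u)] [∀ u, InnerProductSpace ℂ (H u)]
    [∀ u, CompleteSpace (H u)]
    (f : ∀ e, H (s e) →L[ℂ] H (r e)) (v : V)
    (hsink : ∀ e, s e ≠ v)
    (h : PiLp 2 (fun a : {e : E // r e = v} => H (s a.1)) →L[ℂ] H v)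
    (hh : ∀ x, h x = ∑ a : {e : E // r e = v}, (a.2 ▸ (f a.1 (x a)) : H v))
    (hclosed : IsClosed (LinearMap.range h.toLinearMap : Set (H v)))
    -- `(H,f)` is nonzero:
    (hnz : ¬ ∀ u, ∀ x : H u, x = 0)
    -- `(H,f)` is indecomposable: its only idempotent endomorphisms are `0` and `I`:
    (hindec : ∀ T : ∀ u, H u →L[ℂ] H u,
      (∀ e x, T (r e) (f e x) = f e (T (s e) x)) →
      (∀ u, (T u).comp (T u) = T u) →
      (∀ u, T u = 0) ∨ (∀ u, T u = ContinuousLinearMap.id ℂ (H u)))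
    -- `Φᵥ⁺(H,f) ≠ 0`:
    (hne : ¬ ((∀ x : ↥(LinearMap.ker h.toLinearMap), x = 0) ∧ ∀ u, u ≠ v → ∀ x : H u, x = 0)) :
    -- `Φᵥ⁺(H,f)` is indecomposable:
    (∀ (Tv : ↥(LinearMap.ker h.toLinearMap) →L[ℂ] ↥(LinearMap.ker h.toLinearMap)) (T : ∀ u, H u →L[ℂ] H u),
      (∀ (a : {e : E // r e = v}) (k : ↥(LinearMap.ker h.toLinearMap)),
        T (s a.1) ((k : PiLp 2 (fun b : {e : E // r e = v} => H (s b.1))) a)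
          = ((Tv k : ↥(LinearMap.ker h.toLinearMap)) :
              PiLp 2 (fun b : {e : E // r e = v} => H (s b.1))) a) →
      (∀ e : E, r e ≠ v → ∀ x, T (r e) (f e x) = f e (T (s e) x)) →
      Tv.comp Tv = Tv →
      (∀ u, u ≠ v → (T u).comp (T u) = T u) →
      ((Tv = 0 ∧ ∀ u, u ≠ v → T u = 0) ∨
        (Tv = ContinuousLinearMap.id ℂ ↥(LinearMap.ker h.toLinearMap) ∧
          ∀ u, u ≠ v → T u = ContinuousLinearMap.id ℂ (H u)))) ∧
    -- `(H,f) ≅ Φᵥ⁻(Φᵥ⁺(H,f))`: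
    (∃ (φ : ∀ u, H u ≃L[ℂ] H u) (φv : H v ≃L[ℂ] ↥((LinearMap.ker h.toLinearMap)ᗮ)),
      (∀ (a : {e : E // r e = v}) (x : H (s a.1)),
        ((WithLp.equiv 2 (∀ b : {e : E // r e = v}, H (s b.1))).symm
            (Pi.single a (φ (s a.1) x)) -
          (φv (a.2 ▸ (f a.1 x) : H v) :
            PiLp 2 (fun a : {e : E // r e = v} => H (s a.1)))) ∈ LinearMap.ker h.toLinearMap) ∧
      ∀ e : E, r e ≠ v → ∀ x, φ (r e) (f e x) = f e (φ (s e) x)) :=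
  reflection_functor_preserves_indecomposability_at_sink_general s r H f v hsink h hh hclosed hindec
    hne
end
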